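/- arXiv:2510.21488 — 2 statements merged into one kernel-verified Lean document; each statement's English description precedes it below -/
import Mathlib

section
/- The total travel cost decomposes through the backward two-way cost matrix: for every pickup permutation π of {0,…,n} with π(0)=0 and every bijection a of {0,…,n} with a(0)=0, letting π_s(k) = a(π(k)) denote the induced placeholder sequence, one has T(π,a) = Σ_{j=0}^{n} C^{(2)}_{π(j), j}, where C^{(2)}_{i,j} = d(s_{π_s((j-1) mod (n+1))}, p_i) + d(p_i, s_{π_s(j)}). -/
open Finset

/-- Total travel cost `T(π, a)` of the joint assignment–routing tour:
the agent goes from item `p (π k)` to its assigned placeholder `s (a (π k))`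
and then on to the next item `p (π (k+1))`, indices mod `n+1`. -/
noncomputable def tourCost (n : ℕ) (p s : Fin (n + 1) → EuclideanSpace ℝ (Fin 2))
    (π a : Equiv.Perm (Fin (n + 1))) : ℝ :=
  ∑ k : Fin (n + 1),
    (dist (p (π k)) (s (a (π k))) + dist (s (a (π k))) (p (π (k + 1))))

/-- Backward two-way cost matrix for fixed assignment `a` and current sequence `π`:
`C² i j = d(s_{π_s (j-1)}, p_i) + d(p_i, s_{π_s j})` where `π_s k = a (π k)`
is the induced placeholder sequence (indices mod `n+1`). -/
noncomputable def bwdCost (n : ℕ) (p s : Fin (n + 1) → EuclideanSpace ℝ (Fin 2))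
    (π a : Equiv.Perm (Fin (n + 1))) (i j : Fin (n + 1)) : ℝ :=
  dist (s (a (π (j - 1)))) (p i) + dist (p i) (s (a (π j)))

/-- The total travel cost decomposes through the backward two-way cost matrix:
`T(π,a) = Σ_j C²_{π j, j}`. -/
theorem tourCost_eq_sum_bwdCost (n : ℕ) (hn : 1 ≤ n)
    (p s : Fin (n + 1) → EuclideanSpace ℝ (Fin 2))
    (π a : Equiv.Perm (Fin (n + 1))) (hπ : π 0 = 0) (ha : a 0 = 0) :
    tourCost n p s π a = ∑ j : Fin (n + 1), bwdCost n p s π a (π j) j := by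
  unfold tourCost bwdCost
  rw [Finset.sum_add_distrib, Finset.sum_add_distrib, add_comm]
  congr 1
  exact Fintype.sum_equiv (Equiv.addRight (1 : Fin (n+1))) _ _
    (fun k => by simp)
end

section
/- Sequence-update step of the shaking algorithm never increases the cost: fix a bijection a of {0,…,n} with a(0)=0 and a permutation π of {0,…,n} with π(0)=0, let π_s(k) = a(π(k)) be the induced placeholder sequence, and set C^{(2)}_{i,j} = d(s_{π_s((j-1) mod (n+1))}, p_i) + d(p_i, s_{π_s(j)}). If π' is a permutation of {0,…,n} minimizing Σ_{j=0}^{n} C^{(2)}_{π'(j), j} over all permutations, then the tour obtained by visiting item π'(j) between placeholders s_{π_s((j-1) mod (n+1))} and s_{π_s(j)} for each j has total length Σ_{j=0}^{n} C^{(2)}_{π'(j), j} ≤ T(π,a). -/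
open Finset

/-- Sequence-update step of the shaking algorithm never increases the cost:
if `π'` minimizes `Σ_j C²_{π' j, j}` over all permutations, then the resulting
tour length `Σ_j C²_{π' j, j}` is at most `T(π, a)`. -/
theorem sequenceUpdate_le (n : ℕ) (hn : 1 ≤ n)
    (p s : Fin (n + 1) → EuclideanSpace ℝ (Fin 2))
    (π a : Equiv.Perm (Fin (n + 1))) (hπ : π 0 = 0) (ha : a 0 = 0)
    (π' : Equiv.Perm (Fin (n + 1)))
    (hmin : ∀ ρ : Equiv.Perm (Fin (n + 1)),
      ∑ j : Fin (n + 1), bwdCost n p s π a (π' j) j ≤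
        ∑ j : Fin (n + 1), bwdCost n p s π a (ρ j) j) :
    ∑ j : Fin (n + 1), bwdCost n p s π a (π' j) j ≤ tourCost n p s π a := by
  refine le_trans (hmin π) (le_of_eq ?_)
  unfold bwdCost tourCost
  rw [Finset.sum_add_distrib, Finset.sum_add_distrib, add_comm]
  congr 1
  exact Eq.symm <| Fintype.sum_equiv (Equiv.addRight (1 : Fin (n + 1)))
    (fun k => dist (s (a (π k))) (p (π (k + 1))))
    (fun j => dist (s (a (π (j - 1)))) (p (π j)))
    (fun k => by simp)
end
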